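/- Global distinguishability of locally indistinguishable real states: let ρ = (1/2)Γ(|0⟩⟨0|) = (I/2) ⊗ |0⟩⟨0| ∈ ℝ^{4×4}, and set Ψ_K := ρ ⊗ ρ and Ψ_R := 2(ρ ⊗_R ρ) ∈ ℝ^{16×16}. Define E_ω := (1/2)(1_{16}) + ((−1)^ω/2)(J ⊗ 1_2 ⊗ J ⊗ 1_2) for ω ∈ {0,1}. Then {E_0, E_1} is a valid real POVM (both effects symmetric, positive semi-definite, summing to the identity), and tr(Ψ_K E_0) = tr(Ψ_K E_1) = 1/2 while tr(Ψ_R E_0) = 0 and tr(Ψ_R E_1) = 1. -/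
import Mathlib

open Kronecker Matrix

/-- 2×2 rotation matrix J = [[0,-1],[1,0]]. -/
def Jmat : Matrix (Fin 2) (Fin 2) ℝ := !![0, -1; 1, 0]

/-- Entrywise real part of a complex matrix. -/
def reM {d : ℕ} (A : Matrix (Fin d) (Fin d) ℂ) : Matrix (Fin d) (Fin d) ℝ :=
  A.map Complex.re

/-- Entrywise imaginary part of a complex matrix. -/
def imM {d : ℕ} (A : Matrix (Fin d) (Fin d) ℂ) : Matrix (Fin d) (Fin d) ℝ :=
  A.map Complex.im

/-- The standard complex-to-real mapping Γ(A) = I ⊗ Re(A) + J ⊗ Im(A). -/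
def Gamma {d : ℕ} (A : Matrix (Fin d) (Fin d) ℂ) :
    Matrix (Fin 2 × Fin d) (Fin 2 × Fin d) ℝ :=
  (1 : Matrix (Fin 2) (Fin 2) ℝ) ⊗ₖ reM A + Jmat ⊗ₖ imM A
/-- The projector P = (1/2)(1 − J_{d_A} ⊗ J_{d_B}) implementing I⁽²⁾ ⊗ 1 after
permutation of tensor factors. -/
noncomputable def Pproj (dA dB : ℕ) :
    Matrix ((Fin 2 × Fin dA) × (Fin 2 × Fin dB)) ((Fin 2 × Fin dA) × (Fin 2 × Fin dB)) ℝ :=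
  (1 / 2 : ℝ) •
    (1 - (Jmat ⊗ₖ (1 : Matrix (Fin dA) (Fin dA) ℝ)) ⊗ₖ
      (Jmat ⊗ₖ (1 : Matrix (Fin dB) (Fin dB) ℝ)))

/-- The R-product A ⊗_R B := P (A ⊗ B) P. -/
noncomputable def Rprod {dA dB : ℕ}
    (A : Matrix (Fin 2 × Fin dA) (Fin 2 × Fin dA) ℝ)
    (B : Matrix (Fin 2 × Fin dB) (Fin 2 × Fin dB) ℝ) :
    Matrix ((Fin 2 × Fin dA) × (Fin 2 × Fin dB)) ((Fin 2 × Fin dA) × (Fin 2 × Fin dB)) ℝ :=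
  Pproj dA dB * (A ⊗ₖ B) * Pproj dA dB

/-- ρ = (1/2)Γ(|0⟩⟨0|) = (I/2) ⊗ |0⟩⟨0|. -/
noncomputable def rho0 : Matrix (Fin 2 × Fin 2) (Fin 2 × Fin 2) ℝ :=
  (1 / 2 : ℝ) • Gamma (!![1, 0; 0, 0] : Matrix (Fin 2) (Fin 2) ℂ)

/-- The Kronecker-product bipartite state Ψ_K = ρ ⊗ ρ. -/
noncomputable def PsiK :
    Matrix ((Fin 2 × Fin 2) × (Fin 2 × Fin 2)) ((Fin 2 × Fin 2) × (Fin 2 × Fin 2)) ℝ :=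
  rho0 ⊗ₖ rho0

/-- The R-product bipartite state Ψ_R = 2(ρ ⊗_R ρ). -/
noncomputable def PsiR :
    Matrix ((Fin 2 × Fin 2) × (Fin 2 × Fin 2)) ((Fin 2 × Fin 2) × (Fin 2 × Fin 2)) ℝ :=
  (2 : ℝ) • Rprod rho0 rho0

/-- The global effects E_ω = (1/2)·1 + ((−1)^ω/2)·(J⊗1₂)⊗(J⊗1₂). -/
noncomputable def Eff (ω : Fin 2) :
    Matrix ((Fin 2 × Fin 2) × (Fin 2 × Fin 2)) ((Fin 2 × Fin 2) × (Fin 2 × Fin 2)) ℝ :=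
  (1 / 2 : ℝ) • 1 +
    ((-1 : ℝ) ^ (ω : ℕ) / 2) •
      ((Jmat ⊗ₖ (1 : Matrix (Fin 2) (Fin 2) ℝ)) ⊗ₖ (Jmat ⊗ₖ (1 : Matrix (Fin 2) (Fin 2) ℝ)))

/- ### Auxiliary lemmas -/

section Aux

lemma J_mul_J : Jmat * Jmat = -1 := by
  ext i j
  fin_cases i <;> fin_cases j <;>
    simp [Jmat, Matrix.mul_apply, Fin.sum_univ_two, Matrix.one_apply]

lemma J_transpose : Jmatᵀ = (-1 : ℝ) • Jmat := by
  ext i j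
  fin_cases i <;> fin_cases j <;> simp [Jmat]

lemma J_trace : Jmat.trace = 0 := by simp [Jmat, Matrix.trace_fin_two]

/-- The 4×4 block J ⊗ 1. -/
noncomputable def K4 : Matrix (Fin 2 × Fin 2) (Fin 2 × Fin 2) ℝ :=
  Jmat ⊗ₖ (1 : Matrix (Fin 2) (Fin 2) ℝ)

/-- The 16×16 symmetry K = (J⊗1)⊗(J⊗1). -/
noncomputable def Kbig :
    Matrix ((Fin 2 × Fin 2) × (Fin 2 × Fin 2)) ((Fin 2 × Fin 2) × (Fin 2 × Fin 2)) ℝ :=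
  K4 ⊗ₖ K4

lemma K4_mul_K4 : K4 * K4 = -1 := by
  rw [K4, ← Matrix.mul_kronecker_mul, J_mul_J, one_mul,
    show (-1 : Matrix (Fin 2) (Fin 2) ℝ) = (-1 : ℝ) • 1 by simp,
    Matrix.smul_kronecker, Matrix.one_kronecker_one]
  simp

lemma K4_transpose : K4ᵀ = (-1 : ℝ) • K4 := by
  rw [K4, ← Matrix.kroneckerMap_transpose, _root_.J_transpose, Matrix.transpose_one,
    Matrix.smul_kronecker]

lemma Kbig_mul_Kbig : Kbig * Kbig = 1 := by
  rw [Kbig, ← Matrix.mul_kronecker_mul, K4_mul_K4,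
    show (-1 : Matrix (Fin 2 × Fin 2) (Fin 2 × Fin 2) ℝ) = (-1 : ℝ) • 1 by simp,
    Matrix.smul_kronecker, Matrix.kronecker_smul, Matrix.one_kronecker_one]
  simp

lemma Kbig_transpose : Kbigᵀ = Kbig := by
  rw [Kbig, ← Matrix.kroneckerMap_transpose, K4_transpose,
    Matrix.smul_kronecker, Matrix.kronecker_smul]
  simp [Kbig]

lemma Eff_eq (ω : Fin 2) :
    Eff ω = (1 / 2 : ℝ) • 1 + ((-1 : ℝ) ^ (ω : ℕ) / 2) • Kbig := rfl

lemma Eff0_eq : Eff 0 = (1 / 2 : ℝ) • 1 + (1 / 2 : ℝ) • Kbig := by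
  rw [Eff_eq]; norm_num

lemma Eff1_eq : Eff 1 = (1 / 2 : ℝ) • 1 - (1 / 2 : ℝ) • Kbig := by
  rw [Eff_eq]; norm_num; module

lemma Eff_transpose (ω : Fin 2) : (Eff ω)ᵀ = Eff ω := by
  rw [Eff_eq, Matrix.transpose_add, Matrix.transpose_smul, Matrix.transpose_smul,
    Matrix.transpose_one, Kbig_transpose]

lemma Eff_idem (ω : Fin 2) : Eff ω * Eff ω = Eff ω := by
  fin_cases ω <;>
  · first
      | rw [show (⟨0, by norm_num⟩ : Fin 2) = 0 from rfl, Eff0_eq]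
      | rw [show (⟨1, by norm_num⟩ : Fin 2) = 1 from rfl, Eff1_eq]
    simp only [add_mul, mul_add, sub_mul, mul_sub, Matrix.smul_mul, Matrix.mul_smul,
      one_mul, mul_one, Kbig_mul_Kbig, smul_smul]
    module

lemma Eff1_mul_Eff0 : Eff 1 * Eff 0 = 0 := by
  rw [Eff0_eq, Eff1_eq]
  simp only [add_mul, mul_add, sub_mul, mul_sub, Matrix.smul_mul, Matrix.mul_smul,
    one_mul, mul_one, Kbig_mul_Kbig, smul_smul]
  module

lemma rho0_eq :
    rho0 = (1 / 2 : ℝ) •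
      ((1 : Matrix (Fin 2) (Fin 2) ℝ) ⊗ₖ (!![1, 0; 0, 0] : Matrix (Fin 2) (Fin 2) ℝ)) := by
  have hre : reM (!![1, 0; 0, 0] : Matrix (Fin 2) (Fin 2) ℂ) = !![1, 0; 0, 0] := by
    ext i j; fin_cases i <;> fin_cases j <;> simp [reM]
  have him : imM (!![1, 0; 0, 0] : Matrix (Fin 2) (Fin 2) ℂ) = 0 := by
    ext i j; fin_cases i <;> fin_cases j <;> simp [imM]
  rw [rho0, Gamma, hre, him, Matrix.kronecker_zero, add_zero]

lemma rho0_trace : rho0.trace = 1 := by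
  rw [rho0_eq, Matrix.trace_smul, Matrix.trace_kronecker, Matrix.trace_one]
  norm_num [Matrix.trace_fin_two]

lemma rho0_mul_K4_trace : (rho0 * K4).trace = 0 := by
  rw [rho0_eq, K4, Matrix.smul_mul, ← Matrix.mul_kronecker_mul, one_mul, mul_one,
    Matrix.trace_smul, Matrix.trace_kronecker, J_trace]
  simp

lemma PsiK_trace : PsiK.trace = 1 := by
  rw [PsiK, Matrix.trace_kronecker, rho0_trace]; norm_num

lemma PsiK_mul_Kbig_trace : (PsiK * Kbig).trace = 0 := by
  rw [PsiK, Kbig, ← Matrix.mul_kronecker_mul, Matrix.trace_kronecker, rho0_mul_K4_trace]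
  simp

lemma PsiK_trace_Eff (ω : Fin 2) :
    (PsiK * Eff ω).trace = 1 / 2 := by
  rw [Eff_eq, mul_add, Matrix.mul_smul, Matrix.mul_smul, mul_one, Matrix.trace_add,
    Matrix.trace_smul, Matrix.trace_smul, PsiK_trace, PsiK_mul_Kbig_trace]
  simp

lemma Pproj_eq : Pproj 2 2 = Eff 1 := by
  rw [Pproj, Eff1_eq]
  rw [show (Jmat ⊗ₖ (1 : Matrix (Fin 2) (Fin 2) ℝ)) ⊗ₖ
      (Jmat ⊗ₖ (1 : Matrix (Fin 2) (Fin 2) ℝ)) = Kbig from rfl]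
  module

lemma PsiR_eq : PsiR = (2 : ℝ) • (Eff 1 * PsiK * Eff 1) := by
  rw [PsiR, Rprod, Pproj_eq, PsiK]

end Aux

theorem global_distinguishability :
    (∀ ω : Fin 2, (Eff ω).IsSymm ∧ (Eff ω).PosSemidef) ∧
    Eff 0 + Eff 1 = 1 ∧
    (PsiK * Eff 0).trace = 1 / 2 ∧ (PsiK * Eff 1).trace = 1 / 2 ∧
    (PsiR * Eff 0).trace = 0 ∧ (PsiR * Eff 1).trace = 1 := by
  refine ⟨fun ω => ⟨Eff_transpose ω, ?_⟩, ?_, PsiK_trace_Eff 0, PsiK_trace_Eff 1, ?_, ?_⟩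
  · have h := Matrix.posSemidef_conjTranspose_mul_self (Eff ω)
    rwa [Matrix.conjTranspose_eq_transpose_of_trivial, Eff_transpose, Eff_idem] at h
  · rw [Eff0_eq, Eff1_eq]; module
  · rw [PsiR_eq, Matrix.smul_mul, mul_assoc, mul_assoc, Eff1_mul_Eff0, mul_zero, mul_zero]
    simp
  · rw [PsiR_eq, Matrix.smul_mul, mul_assoc, mul_assoc, Eff_idem, Matrix.trace_smul,
      ← mul_assoc, Matrix.trace_mul_comm, ← mul_assoc, Eff_idem, Matrix.trace_mul_comm,
      PsiK_trace_Eff]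
    norm_num
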